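/- arXiv:1710.11061 — 4 statements merged into one kernel-verified Lean document; each statement's English description precedes it below -/
import Mathlib

section
/- Let M : ℝ → ℝ and let 0 < t₁ < t₂ be real numbers with M(t₁²)·t₁ ≥ M(t₂²)·t₂. Define φ : ℝ → ℝ by φ(x) = √(2/π)·cos(x), and set ℓ = t₂·φ and w = t₁·φ. Then: (i) ∫_{−π/2}^{π/2} (ℓ'(x))² dx = t₂² and ∫_{−π/2}^{π/2} (w'(x))² dx = t₁²; (ii) for every x ∈ [−π/2, π/2], −M(t₂²)·ℓ''(x) ≤ −M(t₁²)·w''(x); (iii) ℓ(−π/2) = ℓ(π/2) = w(−π/2) = w(π/2) = 0; and (iv) ℓ(x) > w(x) for every x ∈ (−π/2, π/2). In particular, the comparison principle for the one-dimensional nonlocal operator u ↦ −M(‖u‖²)u'' fails whenever t ↦ M(t²)t is not increasing. -/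
open Real Set

lemma deriv_c_cos (c : ℝ) : deriv (fun x => c * Real.cos x) = fun x => -(c * Real.sin x) := by
  funext x
  rw [deriv_const_mul _ (Real.differentiable_cos x), Real.deriv_cos]
  ring

lemma deriv2_c_cos (c : ℝ) : deriv (deriv (fun x => c * Real.cos x)) = fun x => -(c * Real.cos x) := by
  rw [deriv_c_cos]
  funext x
  have : (fun x => -(c * Real.sin x)) = fun x => (-c) * Real.sin x := by funext x; ring
  rw [this, deriv_const_mul _ (Real.differentiable_sin x), Real.deriv_sin]
  ring

lemma integ_c (c : ℝ) : (∫ x in (-(π / 2))..(π / 2), (deriv (fun x => c * Real.cos x) x) ^ 2)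
    = c ^ 2 * (π / 2) := by
  rw [deriv_c_cos]
  have : (∫ x in (-(π / 2))..(π / 2), (-(c * Real.sin x)) ^ 2)
      = ∫ x in (-(π / 2))..(π / 2), c ^ 2 * (Real.sin x) ^ 2 := by
    congr 1; funext x; ring
  rw [this, intervalIntegral.integral_const_mul, integral_sin_sq]
  have hπ : (0:ℝ) < π := Real.pi_pos
  simp [Real.sin_pi_div_two, Real.cos_pi_div_two]

/-- Necessity of monotonicity of `t ↦ M(t²)t` for the comparison principle:
if `M(t₁²)t₁ ≥ M(t₂²)t₂` for some `0 < t₁ < t₂`, then `ℓ = t₂·φ` and `w = t₁·φ`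
(with `φ` the normalized first eigenfunction `√(2/π)·cos`) violate it. -/
theorem stmt_0 (M : ℝ → ℝ) (t₁ t₂ : ℝ) (ht₁ : 0 < t₁) (ht₁₂ : t₁ < t₂)
    (hM : M (t₁ ^ 2) * t₁ ≥ M (t₂ ^ 2) * t₂)
    (φ ℓ w : ℝ → ℝ)
    (hφ : φ = fun x => Real.sqrt (2 / π) * Real.cos x)
    (hℓ : ℓ = fun x => t₂ * φ x)
    (hw : w = fun x => t₁ * φ x) :
    ((∫ x in (-(π / 2))..(π / 2), (deriv ℓ x) ^ 2) = t₂ ^ 2 ∧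
      (∫ x in (-(π / 2))..(π / 2), (deriv w x) ^ 2) = t₁ ^ 2) ∧
    (∀ x ∈ Set.Icc (-(π / 2)) (π / 2),
      -(M (t₂ ^ 2)) * deriv (deriv ℓ) x ≤ -(M (t₁ ^ 2)) * deriv (deriv w) x) ∧
    (ℓ (-(π / 2)) = 0 ∧ ℓ (π / 2) = 0 ∧ w (-(π / 2)) = 0 ∧ w (π / 2) = 0) ∧
    (∀ x ∈ Set.Ioo (-(π / 2)) (π / 2), ℓ x > w x) := by
  have hπ : (0:ℝ) < π := Real.pi_pos
  have hs : Real.sqrt (2 / π) > 0 := Real.sqrt_pos.mpr (by positivity)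
  have hsq : Real.sqrt (2 / π) ^ 2 = 2 / π := Real.sq_sqrt (by positivity)
  have hℓ' : ℓ = fun x => (t₂ * Real.sqrt (2 / π)) * Real.cos x := by
    funext x; simp [hℓ, hφ]; ring
  have hw' : w = fun x => (t₁ * Real.sqrt (2 / π)) * Real.cos x := by
    funext x; simp [hw, hφ]; ring
  refine ⟨⟨?_, ?_⟩, ?_, ?_, ?_⟩
  · rw [hℓ', integ_c]
    rw [mul_pow, hsq]; field_simp
  · rw [hw', integ_c]
    rw [mul_pow, hsq]; field_simp
  · intro x hx
    rw [hℓ', hw', deriv2_c_cos, deriv2_c_cos]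
    have hcos : 0 ≤ Real.cos x :=
      Real.cos_nonneg_of_mem_Icc ⟨hx.1, hx.2⟩
    have : M (t₂ ^ 2) * t₂ * (Real.sqrt (2 / π) * Real.cos x)
        ≤ M (t₁ ^ 2) * t₁ * (Real.sqrt (2 / π) * Real.cos x) :=
      mul_le_mul_of_nonneg_right hM (by positivity)
    nlinarith [this]
  · simp [hℓ', hw', Real.cos_pi_div_two]
  · intro x hx
    have hcos : 0 < Real.cos x := Real.cos_pos_of_mem_Ioo hx
    rw [hℓ', hw']
    have : t₁ * Real.sqrt (2 / π) < t₂ * Real.sqrt (2 / π) :=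
      mul_lt_mul_of_pos_right ht₁₂ hs
    exact mul_lt_mul_of_pos_right this hcos
end

section
/- Let M : ℝ → ℝ be nonnegative and suppose there exist 0 < t₁ < t₂ with M(t₁) < M(t₂). Then there exist real numbers α > 1, A > 0, L > 1 and ε ∈ (0,1) such that, setting ℓ(x) = A·α·cos(x) and w(x) = A·min(cos(x/L), (1/ε)·cos(x)), the following hold: (i) ∫_{−π/2}^{π/2} (ℓ'(x))² dx = t₁ and ∫_{−π/2}^{π/2} (w'(x))² dx = t₂ (where w' denotes the derivative, taken to be 0 at the finitely many points where w is not differentiable); (ii) ℓ(−π/2) = ℓ(π/2) = w(−π/2) = w(π/2) = 0; (iii) for every x ∈ (−π/2, π/2) at which w is twice differentiable, −M(t₁)·ℓ''(x) < −M(t₂)·w''(x); and (iv) ℓ(0) > w(0). In other words, the weak comparison principle fails for the one-dimensional nonlocal operator u ↦ −M(‖u‖²)u'' whenever M is somewhere increasing. -/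
/-!
Take `α = L = κ > 1` with `M t₁ * κ ^ 3 < M t₂` and write `w = A * W`,
`W = min (cos (· / L)) (cos / ε)`. On the inner branch `-W'' = W / L ^ 2`, on the outer one
`-W'' = W`, and `W ≥ cos` on `[-π/2, π/2]`; at the two kinks `W` is not differentiable, the
one-sided slopes being different. Hence, wherever `w` is twice differentiable,
`-M t₂ * w'' ≥ M t₂ * A * cos x / κ ^ 2 > M t₁ * A * κ * cos x = -M t₁ * ℓ''`,
while `ℓ 0 = A * κ > A = w 0`.

The norms are fixed through the position `±s` of the kinks: `∫ (W')²` is an explicit continuous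
function of `s` which equals `π / 2` at `s = 0` and blows up like `1 / (π / 2 - s)`, so by the
intermediate value theorem it takes the value `T = κ ^ 2 * (π / 2) * t₂ / t₁ > π / 2`.
Scaling by `A = √(t₂ / T)` gives `‖w‖² = t₂` and `‖ℓ‖² = A ^ 2 * κ ^ 2 * π / 2 = t₁`.
-/

open Real Set Filter Topology MeasureTheory

section Min

variable {α β : Type*} [TopologicalSpace α] [LinearOrder β] [TopologicalSpace β]
  [OrderClosedTopology β] {f g : α → β} {x : α}

lemma min_eventuallyEq_left (hf : ContinuousAt f x) (hg : ContinuousAt g x) (h : f x < g x) :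
    (fun y => min (f y) (g y)) =ᶠ[𝓝 x] f :=
  (hf.eventually_lt hg h).mono fun _ hy => min_eq_left hy.le

lemma min_eventuallyEq_right (hf : ContinuousAt f x) (hg : ContinuousAt g x) (h : g x < f x) :
    (fun y => min (f y) (g y)) =ᶠ[𝓝 x] g :=
  (hg.eventually_lt hf h).mono fun _ hy => min_eq_right hy.le

end Min

lemma not_differentiableAt_min {f g : ℝ → ℝ} {f' g' x : ℝ} (hf : HasDerivAt f f' x)
    (hg : HasDerivAt g g' x) (hfg : f x = g x) (hne : f' ≠ g') :
    ¬ DifferentiableAt ℝ (fun y => min (f y) (g y)) x := by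
  intro h
  -- a differentiable function touching `min f g` from above at `x` has the same derivative there
  have touch : ∀ k k', HasDerivAt k k' x → (∀ y, min (f y) (g y) ≤ k y) →
      k x = min (f x) (g x) → k' = deriv (fun y => min (f y) (g y)) x := by
    intro k k' hk hle heq
    have hmin : IsLocalMin (fun y => k y - min (f y) (g y)) x :=
      Eventually.of_forall fun y => by simpa [heq] using hle y
    have := hmin.deriv_eq_zero
    rw [deriv_fun_sub hk.differentiableAt h, hk.deriv] at this
    linarith
  exact hne <| (touch f f' hf (fun _ => min_le_left _ _) (min_eq_left hfg.le).symm).trans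
    (touch g g' hg (fun _ => min_le_right _ _) (min_eq_right hfg.ge).symm).symm

lemma intervalIntegrable_and_integral_eq_of_eqOn_Ioo {f g : ℝ → ℝ} {a b : ℝ} (hab : a ≤ b)
    (hg : Continuous g) (h : EqOn f g (Ioo a b)) :
    IntervalIntegrable f volume a b ∧ ∫ x in a..b, f x = ∫ x in a..b, g x :=
  ⟨(hg.intervalIntegrable a b).congr_uIoo (by rw [uIoo_of_le hab]; exact h.symm),
    intervalIntegral.integral_congr_Ioo_of_le hab h⟩

lemma exists_one_lt_mul_pow_lt {a b : ℝ} (h : a < b) (n : ℕ) :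
    ∃ κ, 1 < κ ∧ a * κ ^ n < b := by
  have hlim : Tendsto (fun κ : ℝ => a * κ ^ n) (𝓝[>] 1) (𝓝 a) := by
    have hcont : Continuous fun κ : ℝ => a * κ ^ n := by fun_prop
    simpa using (hcont.tendsto 1).mono_left nhdsWithin_le_nhds
  exact ((hlim.eventually (gt_mem_nhds h)).and self_mem_nhdsWithin).exists.imp
    fun κ h => ⟨h.2, h.1⟩

section Trig

variable {L x : ℝ}

lemma cos_le_cos_div (hL : 1 ≤ L) (hx : |x| ≤ π) : cos x ≤ cos (x / L) := by
  rw [← cos_abs x, ← cos_abs (x / L), abs_div, abs_of_pos (a := L) (by linarith)]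
  exact cos_le_cos_of_nonneg_of_le_pi (by positivity) hx (div_le_self (abs_nonneg x) hL)

lemma cos_div_pos (hL : 1 < L) (hx : |x| ≤ π / 2) : 0 < cos (x / L) := by
  have hL0 : 0 < L := by linarith
  rw [← cos_abs, abs_div, abs_of_pos (a := L) hL0]
  refine cos_pos_of_mem_Ioo ⟨by linarith [pi_pos, div_nonneg (abs_nonneg x) hL0.le], ?_⟩
  rw [div_lt_iff₀ hL0]
  nlinarith [pi_pos]

lemma cos_pi_div_two_div_pos (hL : 1 < L) : 0 < cos (π / 2 / L) :=
  cos_div_pos hL (abs_of_pos (by positivity)).le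

lemma sin_div_mul_cos_lt (hL : 1 < L) (hx : x ∈ Ioo 0 (π / 2)) :
    sin (x / L) * cos x < L * (sin x * cos (x / L)) := by
  have hL0 : 0 < L := by linarith
  have hxL : x / L < x := div_lt_self hx.1 hL
  have hsub : 0 < sin (x - x / L) :=
    sin_pos_of_pos_of_lt_pi (by linarith) (by linarith [hx.2, pi_pos, div_pos hx.1 hL0])
  have hpos : 0 < sin x * cos (x / L) :=
    mul_pos (sin_pos_of_pos_of_lt_pi hx.1 (by linarith [hx.2, pi_pos]))
      (cos_div_pos hL (by rw [abs_of_pos hx.1]; exact hx.2.le))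
  rw [sin_sub] at hsub
  nlinarith

lemma deriv_const_mul_cos (c : ℝ) : deriv (fun y => c * cos y) = fun y => -(c * sin y) := by
  funext y; simp

lemma deriv_cos_div (L : ℝ) : deriv (fun y => cos (y / L)) = fun y => -(sin (y / L) / L) := by
  funext y; simp [div_eq_mul_inv]

lemma deriv_deriv_const_mul_cos (c x : ℝ) :
    deriv (deriv fun y => c * cos y) x = -(c * cos x) := by
  simp

lemma deriv_deriv_cos_div (L x : ℝ) :
    deriv (deriv fun y => cos (y / L)) x = -(cos (x / L) / L ^ 2) := by
  rw [deriv_cos_div]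
  simp [div_eq_mul_inv, sq, mul_assoc]

lemma integral_deriv_const_mul_sq (c : ℝ) (f : ℝ → ℝ) (a b : ℝ) :
    ∫ x in a..b, deriv (fun y => c * f y) x ^ 2 = c ^ 2 * ∫ x in a..b, deriv f x ^ 2 := by
  simp_rw [deriv_const_mul_field', mul_pow]
  exact intervalIntegral.integral_const_mul _ _

lemma integral_deriv_cos_sq : ∫ x in -(π / 2)..π / 2, deriv cos x ^ 2 = π / 2 := by
  simp [integral_sin_sq]

end Trig

noncomputable def minCos (L ε x : ℝ) : ℝ := min (cos (x / L)) (1 / ε * cos x)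

/-- The branches of `minCos L ε` cross at `±s` exactly when `ε = cosRatio L s`. -/
noncomputable def cosRatio (L x : ℝ) : ℝ := cos x / cos (x / L)

section Crossing

variable {L ε s x : ℝ}

lemma strictAntiOn_cosRatio (hL : 1 < L) : StrictAntiOn (cosRatio L) (Icc 0 (π / 2)) := by
  have hc : ∀ x ∈ Icc 0 (π / 2), cos (x / L) ≠ 0 := fun x hx =>
    (cos_div_pos hL (by rw [abs_of_nonneg hx.1]; exact hx.2)).ne'
  refine strictAntiOn_of_deriv_neg (convex_Icc _ _)
    (fun x hx => (by unfold cosRatio; fun_prop (disch := exact hc x hx) :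
      ContinuousAt (cosRatio L) x).continuousWithinAt)
    fun x hx => ?_
  rw [interior_Icc] at hx
  have hcx := hc x (Ioo_subset_Icc_self hx)
  have hlt := sin_div_mul_cos_lt hL hx
  have hd : HasDerivAt (cosRatio L)
      ((-sin x * cos (x / L) - cos x * (-sin (x / L) * (1 / L))) / cos (x / L) ^ 2) x :=
    (hasDerivAt_cos x).div ((hasDerivAt_id x).div_const L).cos hcx
  rw [hd.deriv]
  refine div_neg_of_neg_of_pos ?_ (by positivity)
  field_simp
  nlinarith

lemma cosRatio_abs : cosRatio L |x| = cosRatio L x := by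
  rcases abs_choice x with h | h <;> simp [cosRatio, h, neg_div]

lemma cosRatio_lt_cosRatio_iff_abs_lt (hL : 1 < L) (hx : |x| ≤ π / 2)
    (hs : s ∈ Ico 0 (π / 2)) : cosRatio L s < cosRatio L x ↔ |x| < s := by
  rw [← cosRatio_abs (x := x)]
  exact (strictAntiOn_cosRatio hL).lt_iff_gt ⟨hs.1, hs.2.le⟩ ⟨abs_nonneg x, hx⟩

lemma cosRatio_lt_cosRatio_iff_lt_abs (hL : 1 < L) (hx : |x| ≤ π / 2)
    (hs : s ∈ Ico 0 (π / 2)) : cosRatio L x < cosRatio L s ↔ s < |x| := by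
  rw [← cosRatio_abs (x := x)]
  exact (strictAntiOn_cosRatio hL).lt_iff_gt ⟨abs_nonneg x, hx⟩ ⟨hs.1, hs.2.le⟩

lemma cosRatio_pos (hL : 1 < L) (hx : |x| < π / 2) : 0 < cosRatio L x :=
  div_pos (cos_pos_of_mem_Ioo (abs_lt.1 hx)) (cos_div_pos hL hx.le)

lemma cosRatio_lt_one (hL : 1 < L) (hs : s ∈ Ioo 0 (π / 2)) : cosRatio L s < 1 := by
  have h := (cosRatio_lt_cosRatio_iff_abs_lt hL (x := 0) (by rw [abs_zero]; positivity)
    ⟨hs.1.le, hs.2⟩).2 (by simpa using hs.1)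
  simpa [cosRatio] using h

lemma cos_div_lt_iff (hL : 1 < L) (hε : 0 < ε) (hx : |x| ≤ π / 2) :
    cos (x / L) < 1 / ε * cos x ↔ ε < cosRatio L x := by
  rw [cosRatio, lt_div_iff₀ (cos_div_pos hL hx), one_div_mul_eq_div, lt_div_iff₀' hε]

lemma lt_cos_div_iff (hL : 1 < L) (hε : 0 < ε) (hx : |x| ≤ π / 2) :
    1 / ε * cos x < cos (x / L) ↔ cosRatio L x < ε := by
  rw [cosRatio, div_lt_iff₀ (cos_div_pos hL hx), one_div_mul_eq_div, div_lt_iff₀' hε]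

end Crossing

section Profile

variable {L s x : ℝ}

lemma minCos_eventuallyEq_of_abs_lt (hL : 1 < L) (hs : s ∈ Ioo 0 (π / 2)) (hx : |x| < s) :
    minCos L (cosRatio L s) =ᶠ[𝓝 x] fun y => cos (y / L) := by
  have hε := cosRatio_pos hL (by rw [abs_of_pos hs.1]; exact hs.2)
  refine min_eventuallyEq_left (by fun_prop) (by fun_prop) ?_
  exact (cos_div_lt_iff hL hε (by linarith [hs.2])).2
    ((cosRatio_lt_cosRatio_iff_abs_lt hL (by linarith [hs.2]) ⟨hs.1.le, hs.2⟩).2 hx)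

lemma minCos_eventuallyEq_of_lt_abs (hL : 1 < L) (hs : s ∈ Ioo 0 (π / 2)) (hx : s < |x|)
    (hx' : |x| ≤ π / 2) :
    minCos L (cosRatio L s) =ᶠ[𝓝 x] fun y => 1 / cosRatio L s * cos y := by
  have hε := cosRatio_pos hL (by rw [abs_of_pos hs.1]; exact hs.2)
  refine min_eventuallyEq_right (by fun_prop) (by fun_prop) ?_
  exact (lt_cos_div_iff hL hε hx').2
    ((cosRatio_lt_cosRatio_iff_lt_abs hL hx' ⟨hs.1.le, hs.2⟩).2 hx)

lemma not_differentiableAt_minCos (hL : 1 < L) (hs : s ∈ Ioo 0 (π / 2)) (hx : |x| = s) :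
    ¬ DifferentiableAt ℝ (minCos L (cosRatio L s)) x := by
  have hcs : 0 < cos s := cos_pos_of_mem_Ioo ⟨by linarith [hs.1, pi_pos], hs.2⟩
  have hslope := sin_div_mul_cos_lt hL hs
  refine not_differentiableAt_min ((hasDerivAt_id x).div_const L).cos
    ((hasDerivAt_cos x).const_mul (1 / cosRatio L s)) ?_ ?_
  all_goals rcases abs_eq hs.1.le |>.1 hx with rfl | rfl <;>
    simp only [cosRatio, id, neg_div, cos_neg, sin_neg, neg_neg, neg_mul, mul_neg, ne_eq, neg_inj]
  all_goals field_simp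
  all_goals exact (hslope.trans_eq (by ring)).ne

lemma deriv_minCos_of_abs_lt (hL : 1 < L) (hs : s ∈ Ioo 0 (π / 2)) (hx : |x| < s) :
    deriv (minCos L (cosRatio L s)) x = -(sin (x / L) / L) := by
  rw [(minCos_eventuallyEq_of_abs_lt hL hs hx).deriv_eq, deriv_cos_div]

lemma deriv_minCos_of_lt_abs (hL : 1 < L) (hs : s ∈ Ioo 0 (π / 2)) (hx : s < |x|)
    (hx' : |x| ≤ π / 2) : deriv (minCos L (cosRatio L s)) x = -(1 / cosRatio L s * sin x) := by
  rw [(minCos_eventuallyEq_of_lt_abs hL hs hx hx').deriv_eq, deriv_const_mul_cos]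

lemma cos_div_sq_le_neg_deriv_deriv_minCos (hL : 1 < L) (hs : s ∈ Ioo 0 (π / 2))
    (hx : x ∈ Ioo (-(π / 2)) (π / 2)) (hd : DifferentiableAt ℝ (minCos L (cosRatio L s)) x) :
    cos x / L ^ 2 ≤ -deriv (deriv (minCos L (cosRatio L s))) x := by
  have hx' : |x| < π / 2 := abs_lt.2 hx
  have hcx : 0 < cos x := cos_pos_of_mem_Ioo hx
  have hL2 : 1 ≤ L ^ 2 := one_le_pow₀ hL.le
  rcases lt_trichotomy |x| s with hin | hkink | hout
  · rw [(minCos_eventuallyEq_of_abs_lt hL hs hin).deriv.deriv_eq, deriv_deriv_cos_div, neg_neg]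
    gcongr
    exact cos_le_cos_div hL.le (by linarith [pi_pos])
  · exact absurd hd (not_differentiableAt_minCos hL hs hkink)
  · rw [(minCos_eventuallyEq_of_lt_abs hL hs hout hx'.le).deriv.deriv_eq,
      deriv_deriv_const_mul_cos, neg_neg]
    have hε : 0 < cosRatio L s := cosRatio_pos hL (by rw [abs_of_pos hs.1]; exact hs.2)
    calc cos x / L ^ 2 ≤ cos x := div_le_self hcx.le hL2
      _ ≤ 1 / cosRatio L s * cos x :=
        le_mul_of_one_le_left hcx.le ((one_le_div₀ hε).2 (cosRatio_lt_one hL hs).le)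

lemma minCos_eq_zero_of_abs_eq (hL : 1 < L) (ε : ℝ) (hx : |x| = π / 2) :
    minCos L ε x = 0 := by
  have hcx : cos x = 0 := by rw [← cos_abs, hx, cos_pi_div_two]
  rw [minCos, hcx, mul_zero, min_eq_right (cos_div_pos hL hx.le).le]

lemma minCos_zero (L : ℝ) {ε : ℝ} (hε : 0 < ε) (hε₁ : ε ≤ 1) : minCos L ε 0 = 1 := by
  simp [minCos, one_le_inv₀ hε, hε₁]

end Profile

noncomputable def minCosEnergy (L s : ℝ) : ℝ :=
  (s / L - sin (s / L) * cos (s / L)) / L +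
    (cos (s / L) / cos s) ^ 2 * (π / 2 - s + sin s * cos s)

section Energy

variable {L s : ℝ}

theorem integral_deriv_minCos_sq (hL : 1 < L) (hs : s ∈ Ioo 0 (π / 2)) :
    ∫ x in -(π / 2)..π / 2, deriv (minCos L (cosRatio L s)) x ^ 2 = minCosEnergy L s := by
  obtain ⟨hi₁, e₁⟩ := intervalIntegrable_and_integral_eq_of_eqOn_Ioo
    (f := fun x => deriv (minCos L (cosRatio L s)) x ^ 2)
    (g := fun x => (1 / cosRatio L s) ^ 2 * sin x ^ 2)
    (a := -(π / 2)) (b := -s) (by linarith [hs.2]) (by fun_prop) fun x hx => by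
      have hx' : |x| = -x := abs_of_neg (by linarith [hx.2, hs.1])
      dsimp only
      rw [deriv_minCos_of_lt_abs hL hs (by linarith [hx.2]) (by linarith [hx.1])]
      ring
  obtain ⟨hi₂, e₂⟩ := intervalIntegrable_and_integral_eq_of_eqOn_Ioo
    (f := fun x => deriv (minCos L (cosRatio L s)) x ^ 2)
    (g := fun x => (1 / L) ^ 2 * sin (x / L) ^ 2)
    (a := -s) (b := s) (by linarith [hs.1]) (by fun_prop) fun x hx => by
      dsimp only
      rw [deriv_minCos_of_abs_lt hL hs (abs_lt.2 hx)]
      ring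
  obtain ⟨hi₃, e₃⟩ := intervalIntegrable_and_integral_eq_of_eqOn_Ioo
    (f := fun x => deriv (minCos L (cosRatio L s)) x ^ 2)
    (g := fun x => (1 / cosRatio L s) ^ 2 * sin x ^ 2)
    (a := s) (b := π / 2) hs.2.le (by fun_prop) fun x hx => by
      have hx' : |x| = x := abs_of_pos (by linarith [hx.1, hs.1])
      dsimp only
      rw [deriv_minCos_of_lt_abs hL hs (by linarith [hx.1]) (by linarith [hx.2])]
      ring
  rw [← intervalIntegral.integral_add_adjacent_intervals (hi₁.trans hi₂) hi₃,
    ← intervalIntegral.integral_add_adjacent_intervals hi₁ hi₂, e₁, e₂, e₃]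
  simp only [intervalIntegral.integral_const_mul, integral_sin_sq,
    intervalIntegral.integral_comp_div (fun y => sin y ^ 2) (by linarith : L ≠ 0),
    minCosEnergy, cosRatio, neg_div, sin_neg, cos_neg, sin_pi_div_two, cos_pi_div_two,
    smul_eq_mul]
  field_simp
  ring

lemma minCosEnergy_zero (L : ℝ) : minCosEnergy L 0 = π / 2 := by
  simp [minCosEnergy]

lemma continuousOn_minCosEnergy (L : ℝ) :
    ContinuousOn (minCosEnergy L) (Ioo (-(π / 2)) (π / 2)) :=
  fun s hs => (by unfold minCosEnergy; fun_prop (disch := exact (cos_pos_of_mem_Ioo hs).ne') :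
    ContinuousAt (minCosEnergy L) s).continuousWithinAt

lemma div_le_minCosEnergy (hL : 1 < L) (hs : s ∈ Ico 0 (π / 2)) :
    cos (π / 2 / L) ^ 2 / (π / 2 - s) ≤ minCosEnergy L s := by
  have hπ := pi_pos
  have hL0 : 0 < L := by linarith
  have hsL : 0 ≤ s / L := div_nonneg hs.1 hL0.le
  have hδ : 0 < π / 2 - s := by linarith [hs.2]
  have hcs : 0 < cos s := cos_pos_of_mem_Ioo ⟨by linarith [hs.1], hs.2⟩
  have hcs_le : cos s ≤ π / 2 - s := by
    rw [← sin_pi_div_two_sub]; exact sin_le hδ.le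
  have hc : cos (π / 2 / L) ≤ cos (s / L) :=
    cos_le_cos_of_nonneg_of_le_pi hsL
      (by linarith [div_le_self (by positivity : 0 ≤ π / 2) hL.le])
      (div_le_div_of_nonneg_right hs.2.le hL0.le)
  have hc0 := cos_pi_div_two_div_pos hL
  have hinner : 0 ≤ (s / L - sin (s / L) * cos (s / L)) / L :=
    div_nonneg (by nlinarith [sin_le hsL, cos_le_one (s / L)]) hL0.le
  have hsc : 0 ≤ sin s * cos s :=
    mul_nonneg (sin_nonneg_of_nonneg_of_le_pi hs.1 (by linarith [hs.2])) hcs.le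
  calc cos (π / 2 / L) ^ 2 / (π / 2 - s)
      = (cos (π / 2 / L) / (π / 2 - s)) ^ 2 * (π / 2 - s) := by field_simp
    _ ≤ (cos (s / L) / cos s) ^ 2 * (π / 2 - s + sin s * cos s) := by gcongr <;> linarith
    _ ≤ minCosEnergy L s := by unfold minCosEnergy; linarith

theorem exists_minCosEnergy_eq (hL : 1 < L) {T : ℝ} (hT : π / 2 < T) :
    ∃ s ∈ Ioo 0 (π / 2), minCosEnergy L s = T := by
  have hπ := pi_pos
  have hT0 : 0 < T := by linarith
  set c := cos (π / 2 / L) ^ 2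
  have hc : 0 < c := pow_pos (cos_pi_div_two_div_pos hL) 2
  set δ := min (π / 4) (c / T)
  have hδ : 0 < δ := lt_min (by positivity) (by positivity)
  have hδπ : δ ≤ π / 4 := min_le_left _ _
  have hb : T ≤ minCosEnergy L (π / 2 - δ) := by
    refine le_trans ?_ (div_le_minCosEnergy hL ⟨by linarith, by linarith⟩)
    rw [sub_sub_cancel, le_div_iff₀ hδ]
    calc T * δ ≤ T * (c / T) := by gcongr; exact min_le_right _ _
      _ = c := by field_simp
  obtain ⟨s, hs, hsT⟩ := intermediate_value_Icc (by linarith : (0 : ℝ) ≤ π / 2 - δ)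
    ((continuousOn_minCosEnergy L).mono fun x hx => ⟨by linarith [hx.1], by linarith [hx.2]⟩)
    ⟨(minCosEnergy_zero L).trans_le hT.le, hb⟩
  refine ⟨s, ⟨lt_of_le_of_ne hs.1 ?_, by linarith [hs.2]⟩, hsT⟩
  rintro rfl
  rw [minCosEnergy_zero] at hsT
  linarith

end Energy

lemma neg_mul_deriv_deriv_cos_lt_minCos {κ s A m₁ m₂ x : ℝ} (hκ : 1 < κ)
    (hs : s ∈ Ioo 0 (π / 2)) (hA : 0 < A) (hm₂ : 0 ≤ m₂) (hm : m₁ * κ ^ 3 < m₂)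
    (hx : x ∈ Ioo (-(π / 2)) (π / 2))
    (hd : DifferentiableAt ℝ (fun y => A * minCos κ (cosRatio κ s) y) x) :
    -m₁ * deriv (deriv fun y => A * κ * cos y) x <
      -m₂ * deriv (deriv fun y => A * minCos κ (cosRatio κ s) y) x := by
  have hd' : DifferentiableAt ℝ (minCos κ (cosRatio κ s)) x := by
    simpa [hA.ne'] using hd.const_mul A⁻¹
  have hW := cos_div_sq_le_neg_deriv_deriv_minCos hκ hs hx hd'
  have hcx : 0 < cos x := cos_pos_of_mem_Ioo hx
  rw [deriv_deriv_const_mul_cos, deriv_const_mul_field', deriv_const_mul_field']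
  calc -m₁ * -(A * κ * cos x) = m₁ * κ ^ 3 * (A * (cos x / κ ^ 2)) := by field_simp
    _ < m₂ * (A * (cos x / κ ^ 2)) := by gcongr
    _ ≤ m₂ * (A * -deriv (deriv (minCos κ (cosRatio κ s))) x) := by gcongr
    _ = -m₂ * (A * deriv (deriv (minCos κ (cosRatio κ s))) x) := by ring

/-- Failure of the weak comparison principle for the one-dimensional nonlocal
operator `u ↦ −M(‖u‖²)u''` when `M` is somewhere increasing. -/
theorem stmt_2 (M : ℝ → ℝ) (hM : ∀ t, 0 ≤ M t) (t₁ t₂ : ℝ)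
    (ht₁ : 0 < t₁) (ht₁₂ : t₁ < t₂) (hMt : M t₁ < M t₂) :
    ∃ α A L ε : ℝ, 1 < α ∧ 0 < A ∧ 1 < L ∧ 0 < ε ∧ ε < 1 ∧
      ∀ ℓ w : ℝ → ℝ,
        ℓ = (fun x => A * α * Real.cos x) →
        w = (fun x => A * min (Real.cos (x / L)) ((1 / ε) * Real.cos x)) →
        -- (i) the squared H¹₀-norms are t₁ and t₂
        ((∫ x in (-(π / 2))..(π / 2), (deriv ℓ x) ^ 2) = t₁ ∧
          (∫ x in (-(π / 2))..(π / 2), (deriv w x) ^ 2) = t₂) ∧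
        -- (ii) boundary values
        (ℓ (-(π / 2)) = 0 ∧ ℓ (π / 2) = 0 ∧ w (-(π / 2)) = 0 ∧ w (π / 2) = 0) ∧
        -- (iii) strict inequality between the operators where w is twice differentiable
        (∀ x ∈ Set.Ioo (-(π / 2)) (π / 2),
          DifferentiableAt ℝ w x → DifferentiableAt ℝ (deriv w) x →
          -(M t₁) * deriv (deriv ℓ) x < -(M t₂) * deriv (deriv w) x) ∧
        -- (iv) yet ℓ exceeds w at the interior point 0
        ℓ 0 > w 0 := by
  have ht₂ : 0 < t₂ := ht₁.trans ht₁₂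
  obtain ⟨κ, hκ, hMκ⟩ := exists_one_lt_mul_pow_lt hMt 3
  set T := κ ^ 2 * (π / 2) * t₂ / t₁
  have hT : π / 2 < T := by
    rw [lt_div_iff₀ ht₁]
    calc π / 2 * t₁ < 1 * (π / 2) * t₂ := by nlinarith [pi_pos]
      _ ≤ κ ^ 2 * (π / 2) * t₂ := by gcongr; exact (one_lt_pow₀ hκ two_ne_zero).le
  obtain ⟨s, hs, hsT⟩ := exists_minCosEnergy_eq hκ hT
  have hε : 0 < cosRatio κ s := cosRatio_pos hκ (by rw [abs_of_pos hs.1]; exact hs.2)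
  set A := √(t₂ / T)
  have hA : 0 < A := Real.sqrt_pos.2 (by positivity)
  have hA2 : A ^ 2 = t₂ / T := Real.sq_sqrt (by positivity)
  refine ⟨κ, A, κ, cosRatio κ s, hκ, hA, hκ, hε, cosRatio_lt_one hκ hs, ?_⟩
  rintro ℓ w rfl rfl
  rw [show (fun x => A * min (cos (x / κ)) (1 / cosRatio κ s * cos x)) =
    fun x => A * minCos κ (cosRatio κ s) x from rfl]
  refine ⟨⟨?_, ?_⟩, ⟨by simp, by simp, ?_, ?_⟩,
    fun x hx hd _ => neg_mul_deriv_deriv_cos_lt_minCos hκ hs hA (hM t₂) hMκ hx hd, ?_⟩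
  · rw [integral_deriv_const_mul_sq, integral_deriv_cos_sq, mul_pow, hA2]
    simp only [T]
    field_simp
  · rw [integral_deriv_const_mul_sq, integral_deriv_minCos_sq hκ hs, hsT, hA2]
    exact div_mul_cancel₀ _ (by linarith [pi_pos])
  · dsimp only
    rw [minCos_eq_zero_of_abs_eq hκ _ (by rw [abs_neg, abs_of_pos (by positivity)]), mul_zero]
  · dsimp only
    rw [minCos_eq_zero_of_abs_eq hκ _ (abs_of_pos (by positivity)), mul_zero]
  · show A * minCos κ (cosRatio κ s) 0 < A * κ * cos 0
    rw [minCos_zero κ hε (cosRatio_lt_one hκ hs).le, cos_zero, mul_one, mul_one]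
    exact lt_mul_of_one_lt_right hA hκ
end

section
/- Let a > 0 and let u : ℝ → ℝ be continuously differentiable on [−a, a] with u(−a) = u(a) = 0. Then ∫_{−a}^{a} (u'(x))² dx ≥ (π/(2a))² · ∫_{−a}^{a} (u(x))² dx. -/
/-!
For `0 ≤ k` with `k * a < π / 2` the function `-k tan (k x) u(x)²` is differentiable on `[-a, a]`,
vanishes at `±a`, and has derivative `u'² - k² u² - (u' + k tan (k x) u)²`. Integrating,
`∫ u'² - k² ∫ u² = ∫ (u' + k tan (k x) u)² ≥ 0`. At `k = π / (2a)` itself `tan (k x)` blows up at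
the endpoints, so the sharp constant is reached by letting `k` increase to `π / (2a)`.
-/

open Real Set

open Filter Topology MeasureTheory

lemma hasDerivAt_neg_mul_tan_mul_mul_sq {k x u'x : ℝ} {u : ℝ → ℝ} (hcos : cos (k * x) ≠ 0)
    (hu : HasDerivAt u u'x x) :
    HasDerivAt (fun y => -k * tan (k * y) * u y ^ 2)
      (u'x ^ 2 - k ^ 2 * u x ^ 2 - (u'x + k * tan (k * x) * u x) ^ 2) x := by
  have htan : HasDerivAt (fun y => tan (k * y)) (1 / cos (k * x) ^ 2 * k) x :=
    (hasDerivAt_tan hcos).comp x (by simpa using (hasDerivAt_id x).const_mul k)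
  refine ((htan.const_mul (-k)).mul (hu.pow 2)).congr_deriv ?_
  rw [Pi.pow_apply, tan_eq_sin_div_cos]
  field_simp
  linear_combination k ^ 2 * u x ^ 2 * sin_sq_add_cos_sq (k * x)

theorem sq_mul_integral_sq_le_integral_deriv_sq {a k : ℝ} (ha : 0 ≤ a) (hk : 0 ≤ k)
    (hka : k * a < π / 2) {u u' : ℝ → ℝ} (hu : ∀ x ∈ Icc (-a) a, HasDerivAt u (u' x) x)
    (hu' : ContinuousOn u' (Icc (-a) a)) (h₁ : u (-a) = 0) (h₂ : u a = 0) :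
    k ^ 2 * ∫ x in (-a)..a, u x ^ 2 ≤ ∫ x in (-a)..a, u' x ^ 2 := by
  have hIcc : uIcc (-a) a = Icc (-a) a := uIcc_of_le (by linarith)
  have hcos : ∀ x ∈ Icc (-a) a, cos (k * x) ≠ 0 := fun x hx =>
    (cos_pos_of_mem_Ioo ⟨by nlinarith [hx.1], by nlinarith [hx.2]⟩).ne'
  have hu_cont : ContinuousOn u (Icc (-a) a) := fun x hx =>
    (hu x hx).continuousAt.continuousWithinAt
  have htan_cont : ContinuousOn (fun x => tan (k * x)) (Icc (-a) a) :=
    continuousOn_tan.comp (continuous_const.mul continuous_id).continuousOn hcos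
  have hint {f : ℝ → ℝ} (hf : ContinuousOn f (Icc (-a) a)) : IntervalIntegrable f volume (-a) a :=
    hf.intervalIntegrable_of_Icc (by linarith)
  have hu2 : IntervalIntegrable (fun x => u x ^ 2) volume (-a) a := hint (hu_cont.pow 2)
  have hu'2 : IntervalIntegrable (fun x => u' x ^ 2) volume (-a) a := hint (hu'.pow 2)
  have hftc : ∫ x in (-a)..a, (u' x ^ 2 - k ^ 2 * u x ^ 2 - (u' x + k * tan (k * x) * u x) ^ 2)
      = 0 := by
    rw [intervalIntegral.integral_eq_sub_of_hasDerivAt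
      (fun x hx => hasDerivAt_neg_mul_tan_mul_mul_sq (hcos x (hIcc ▸ hx)) (hu x (hIcc ▸ hx)))
      (hint (by fun_prop))]
    simp [h₁, h₂]
  have hsq : 0 ≤ ∫ x in (-a)..a, (u' x + k * tan (k * x) * u x) ^ 2 :=
    intervalIntegral.integral_nonneg (by linarith) fun x _ => sq_nonneg _
  rw [intervalIntegral.integral_sub (hu'2.sub (hu2.const_mul _)) (hint (by fun_prop)),
    intervalIntegral.integral_sub hu'2 (hu2.const_mul _), intervalIntegral.integral_const_mul]
    at hftc
  linarith

/-- Poincaré–Wirtinger inequality for the Dirichlet problem on `(−a, a)`: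
`∫ (u')² ≥ (π/(2a))² ∫ u²` for `u` continuously differentiable on `[−a, a]`
vanishing at the endpoints. -/
theorem stmt_5 (a : ℝ) (ha : 0 < a) (u : ℝ → ℝ)
    (hdiff : ∀ x ∈ Set.Icc (-a) a, HasDerivAt u (deriv u x) x)
    (hcont : ContinuousOn (deriv u) (Set.Icc (-a) a))
    (hbd₁ : u (-a) = 0) (hbd₂ : u a = 0) :
    (∫ x in (-a)..a, (deriv u x) ^ 2) ≥ (π / (2 * a)) ^ 2 * ∫ x in (-a)..a, (u x) ^ 2 := by
  have hc : 0 < π / (2 * a) := by positivity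
  have hlim : Tendsto (fun k => k ^ 2 * ∫ x in (-a)..a, u x ^ 2) (𝓝[<] (π / (2 * a)))
      (𝓝 ((π / (2 * a)) ^ 2 * ∫ x in (-a)..a, u x ^ 2)) :=
    ((continuous_pow 2).mul continuous_const).continuousWithinAt
  refine le_of_tendsto hlim ?_
  filter_upwards [Ioo_mem_nhdsLT hc] with k hk
  have hka : k * a < π / 2 := by
    calc k * a < π / (2 * a) * a := by gcongr; exact hk.2
      _ = π / 2 := by field_simp
  exact sq_mul_integral_sq_le_integral_deriv_sq ha.le hk.1.le hka hdiff hcont hbd₁ hbd₂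
end

section
/- Let L > 1 and ε ∈ (0,1). Then there exists a unique x₀ ∈ (0, π/2) such that cos(x₀) = ε·cos(x₀/L); moreover, for every x with 0 ≤ x < x₀ one has cos(x) > ε·cos(x/L), and for every x with x₀ < x < π/2 one has cos(x) < ε·cos(x/L). Consequently, the function u_{ε,L}(x) = min(cos(x/L), (1/ε)·cos(x)) equals cos(x/L) for |x| ≤ x₀ and equals (1/ε)·cos(x) for x₀ ≤ |x| ≤ π/2. -/
open Real Set

/-! The ratio `cos x / cos (x / L)` decreases strictly from `1` to `0` on `[0, π/2]`: writing both
sides of `cos y cos (x/L) < cos x cos (y/L)` as sums of cosines, each cosine on the left has the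
larger argument (in absolute value) within `[0, π]`. Hence the ratio takes the value `ε` exactly
once, at `x₀`, and `cos x - ε cos (x/L)` has the sign of `x₀ - x`; the statement about `u_{ε,L}`
follows by evenness. -/

lemma cos_div_pos_of_mem_Icc {L x : ℝ} (hL : 1 < L) (hx : x ∈ Icc 0 (π / 2)) :
    0 < cos (x / L) := by
  have hL0 : 0 < L := one_pos.trans hL
  apply cos_pos_of_mem_Ioo
  constructor
  · linarith [div_nonneg hx.1 hL0.le, pi_pos]
  · rw [div_lt_iff₀ hL0]
    exact hx.2.trans_lt (lt_mul_of_one_lt_right (by positivity) hL)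

lemma cos_mul_cos_div_lt_cos_mul_cos_div {L x y : ℝ} (hL : 1 < L) (hx : 0 ≤ x) (hxy : x < y)
    (hy : y ≤ π / 2) : cos y * cos (x / L) < cos x * cos (y / L) := by
  have hL0 : 0 < L := one_pos.trans hL
  have hxL : 0 ≤ x / L := div_nonneg hx hL0.le
  have hyL : 0 ≤ y / L := div_nonneg (hx.trans hxy.le) hL0.le
  have hxLx : x / L ≤ x := div_le_self hx hL.le
  have hxyL : x / L < y / L := div_lt_div_of_pos_right hxy hL0
  have hdiff : y / L - x / L < y - x := by
    rw [← sub_div]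
    exact div_lt_self (by linarith) hL
  have hsum : y / L + x / L < y + x := by
    rw [← add_div]
    exact div_lt_self (by linarith) hL
  have hsum_lt : cos (y + x / L) < cos (x + y / L) :=
    cos_lt_cos_of_nonneg_of_le_pi (by linarith) (by linarith [pi_pos]) (by linarith)
  have hsub_lt : cos (y - x / L) < cos (x - y / L) := by
    rw [← cos_abs (x - y / L)]
    exact cos_lt_cos_of_nonneg_of_le_pi (abs_nonneg _) (by linarith [pi_pos])
      (abs_sub_lt_iff.2 ⟨by linarith, by linarith⟩)
  have hleft : cos y * cos (x / L) = (cos (y - x / L) + cos (y + x / L)) / 2 := by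
    rw [cos_sub, cos_add]; ring
  have hright : cos x * cos (y / L) = (cos (x - y / L) + cos (x + y / L)) / 2 := by
    rw [cos_sub, cos_add]; ring
  rw [hleft, hright]
  linarith

lemma strictAntiOn_cos_div_cos_div {L : ℝ} (hL : 1 < L) :
    StrictAntiOn (fun x ↦ cos x / cos (x / L)) (Icc 0 (π / 2)) := by
  intro x hx y hy hxy
  rw [div_lt_div_iff₀ (cos_div_pos_of_mem_Icc hL hy) (cos_div_pos_of_mem_Icc hL hx)]
  exact cos_mul_cos_div_lt_cos_mul_cos_div hL hx.1 hxy hy.2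

lemma exists_cos_div_cos_div_eq {L ε : ℝ} (hL : 1 < L) (hε₀ : 0 < ε) (hε₁ : ε < 1) :
    ∃ x₀ ∈ Ioo 0 (π / 2), cos x₀ / cos (x₀ / L) = ε := by
  have hcont : ContinuousOn (fun x ↦ cos x / cos (x / L)) (Icc 0 (π / 2)) :=
    continuousOn_cos.div (by fun_prop) fun x hx ↦ (cos_div_pos_of_mem_Icc hL hx).ne'
  have hε : ε ∈ Ioo (cos (π / 2) / cos (π / 2 / L)) (cos 0 / cos (0 / L)) := by
    simpa [cos_pi_div_two] using ⟨hε₀, hε₁⟩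
  exact intermediate_value_Ioo' (by positivity) hcont hε

section Crossing

variable {L ε x x₀ : ℝ} (hL : 1 < L) (hx : x ∈ Icc 0 (π / 2)) (hx₀ : x₀ ∈ Icc 0 (π / 2))
  (hεx₀ : cos x₀ / cos (x₀ / L) = ε)
include hL hx hx₀ hεx₀

lemma mul_cos_div_lt_cos_iff_lt : ε * cos (x / L) < cos x ↔ x < x₀ := by
  rw [← lt_div_iff₀ (cos_div_pos_of_mem_Icc hL hx), ← hεx₀]
  exact (strictAntiOn_cos_div_cos_div hL).lt_iff_gt hx₀ hx

lemma cos_lt_mul_cos_div_iff_lt : cos x < ε * cos (x / L) ↔ x₀ < x := by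
  rw [← div_lt_iff₀ (cos_div_pos_of_mem_Icc hL hx), ← hεx₀]
  exact (strictAntiOn_cos_div_cos_div hL).lt_iff_gt hx hx₀

lemma mul_cos_div_le_cos_iff_le : ε * cos (x / L) ≤ cos x ↔ x ≤ x₀ := by
  rw [← not_lt, cos_lt_mul_cos_div_iff_lt hL hx hx₀ hεx₀, not_lt]

lemma cos_le_mul_cos_div_iff_le : cos x ≤ ε * cos (x / L) ↔ x₀ ≤ x := by
  rw [← not_lt, mul_cos_div_lt_cos_iff_lt hL hx hx₀ hεx₀, not_lt]

end Crossing

/-- For `L > 1` and `ε ∈ (0,1)`, the graphs of `cos x` and `ε·cos(x/L)` cross at a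
unique point `x₀ ∈ (0, π/2)`; before it `cos x > ε·cos(x/L)` and after it
`cos x < ε·cos(x/L)`. Consequently `min(cos(x/L), (1/ε)·cos x)` equals `cos(x/L)`
for `|x| ≤ x₀` and `(1/ε)·cos x` for `x₀ ≤ |x| ≤ π/2`. -/
theorem stmt_7 (L ε : ℝ) (hL : 1 < L) (hε₀ : 0 < ε) (hε₁ : ε < 1) :
    ∃ x₀ ∈ Set.Ioo 0 (π / 2),
      Real.cos x₀ = ε * Real.cos (x₀ / L) ∧
      (∀ y ∈ Set.Ioo 0 (π / 2), Real.cos y = ε * Real.cos (y / L) → y = x₀) ∧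
      (∀ x, 0 ≤ x → x < x₀ → Real.cos x > ε * Real.cos (x / L)) ∧
      (∀ x, x₀ < x → x < π / 2 → Real.cos x < ε * Real.cos (x / L)) ∧
      (∀ x, |x| ≤ x₀ →
        min (Real.cos (x / L)) ((1 / ε) * Real.cos x) = Real.cos (x / L)) ∧
      (∀ x, x₀ ≤ |x| → |x| ≤ π / 2 →
        min (Real.cos (x / L)) ((1 / ε) * Real.cos x) = (1 / ε) * Real.cos x) := by
  obtain ⟨x₀, hx₀, hεx₀⟩ := exists_cos_div_cos_div_eq hL hε₀ hε₁
  have hx₀' : x₀ ∈ Icc 0 (π / 2) := Ioo_subset_Icc_self hx₀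
  have hcos_abs_div (x : ℝ) : cos (|x| / L) = cos (x / L) := by
    rw [← cos_abs (x / L), abs_div, abs_of_pos (one_pos.trans hL)]
  refine ⟨x₀, hx₀, ?_, ?_, ?_, ?_, ?_, ?_⟩
  · rw [← hεx₀, div_mul_cancel₀ _ (cos_div_pos_of_mem_Icc hL hx₀').ne']
  · intro y hy hyx₀
    have hy' : y ∈ Icc 0 (π / 2) := Ioo_subset_Icc_self hy
    exact le_antisymm ((mul_cos_div_le_cos_iff_le hL hy' hx₀' hεx₀).1 hyx₀.ge)
      ((cos_le_mul_cos_div_iff_le hL hy' hx₀' hεx₀).1 hyx₀.le)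
  · intro x hx hxx₀
    exact (mul_cos_div_lt_cos_iff_lt hL ⟨hx, hxx₀.le.trans hx₀'.2⟩ hx₀' hεx₀).2 hxx₀
  · intro x hxx₀ hx
    exact (cos_lt_mul_cos_div_iff_lt hL ⟨hx₀'.1.trans hxx₀.le, hx.le⟩ hx₀' hεx₀).2 hxx₀
  · intro x hx
    apply min_eq_left
    rw [one_div_mul_eq_div, le_div_iff₀' hε₀, ← cos_abs x, ← hcos_abs_div x]
    exact (mul_cos_div_le_cos_iff_le hL ⟨abs_nonneg x, hx.trans hx₀'.2⟩ hx₀' hεx₀).2 hx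
  · intro x hx hx'
    apply min_eq_right
    rw [one_div_mul_eq_div, div_le_iff₀' hε₀, ← cos_abs x, ← hcos_abs_div x]
    exact (cos_le_mul_cos_div_iff_le hL ⟨abs_nonneg x, hx'⟩ hx₀' hεx₀).2 hx
end
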